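/- Let M, N ∈ S^{q+r}. Assume that Z_{q,r}(N) ⊆ Z_{q,r}(M), that Z_{q,r}(N) is nonempty, and that M ∈ Π_{q,r}. Then for every x ∈ ℝ^r, xᵀM₂₂x < 0 implies xᵀN₂₂x < 0. -/

import Mathlib

open Matrix

noncomputable section

/-- Moore–Penrose pseudoinverse of a real square matrix, defined via classical choice
(the Moore–Penrose inverse exists and is unique for real matrices). -/
def pinv {k : Type*} [Fintype k] (A : Matrix k k ℝ) : Matrix k k ℝ := by
  classical
  exact if h : ∃ B : Matrix k k ℝ,
      A * B * A = A ∧ B * A * B = B ∧ (A * B)ᵀ = A * B ∧ (B * A)ᵀ = B * A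
    then h.choose else 0

/-- Positive semidefinite square root of a real matrix (junk value `0` if not PSD). -/
def msqrt {k : Type*} [Fintype k] [DecidableEq k] (A : Matrix k k ℝ) : Matrix k k ℝ := by
  classical
  exact if h : A.PosSemidef then
    h.1.eigenvectorUnitary.1 * diagonal ((Real.sqrt ·) ∘ h.1.eigenvalues) *
      (star h.1.eigenvectorUnitary : Matrix k k ℝ) else 0

/-- `Z_{q,r}(N) = { Z : [I; Z]ᵀ N [I; Z] ⪰ 0 }`. -/
def ZSet {q r : Type*} [Fintype q] [Fintype r] [DecidableEq q]
    (N : Matrix (q ⊕ r) (q ⊕ r) ℝ) : Set (Matrix r q ℝ) :=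
  {Z | ((fromRows (1 : Matrix q q ℝ) Z)ᵀ * N * fromRows (1 : Matrix q q ℝ) Z).PosSemidef}

/-- `Z⁺_{q,r}(N) = { Z : [I; Z]ᵀ N [I; Z] ≻ 0 }`. -/
def ZSetP {q r : Type*} [Fintype q] [Fintype r] [DecidableEq q]
    (N : Matrix (q ⊕ r) (q ⊕ r) ℝ) : Set (Matrix r q ℝ) :=
  {Z | ((fromRows (1 : Matrix q q ℝ) Z)ᵀ * N * fromRows (1 : Matrix q q ℝ) Z).PosDef}

/-- `Π_{q,r}`: symmetric matrices `N` with `N₂₂ ⪯ 0`, `ker N₂₂ ⊆ ker N₁₂` and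
`N₁₁ - N₁₂ N₂₂† N₁₂ᵀ ⪰ 0`. -/
def PiSet (q r : Type*) [Fintype q] [Fintype r] : Set (Matrix (q ⊕ r) (q ⊕ r) ℝ) :=
  {N | N.IsSymm ∧ (-(N.toBlocks₂₂)).PosSemidef ∧
      (∀ x : r → ℝ, N.toBlocks₂₂ *ᵥ x = 0 → N.toBlocks₁₂ *ᵥ x = 0) ∧
      (N.toBlocks₁₁ - N.toBlocks₁₂ * pinv N.toBlocks₂₂ * (N.toBlocks₁₂)ᵀ).PosSemidef}

lemma dot_shift {m n : Type*} [Fintype m] [Fintype n] (A : Matrix m n ℝ) (u : m → ℝ) (v : n → ℝ) :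
    u ⬝ᵥ (A *ᵥ v) = (Aᵀ *ᵥ u) ⬝ᵥ v := by
  rw [Matrix.dotProduct_mulVec, ← Matrix.vecMul_transpose, Matrix.transpose_transpose]

lemma symm_dot {k : Type*} [Fintype k] {Q : Matrix k k ℝ} (hQ : Q.IsSymm) (u v : k → ℝ) :
    u ⬝ᵥ (Q *ᵥ v) = v ⬝ᵥ (Q *ᵥ u) := by
  rw [dot_shift, hQ.eq, dotProduct_comm]

lemma quad_expand {k : Type*} [Fintype k] {Q : Matrix k k ℝ} (hQ : Q.IsSymm) (w e : k → ℝ) (s : ℝ) :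
    (w + s • e) ⬝ᵥ (Q *ᵥ (w + s • e)) =
      w ⬝ᵥ (Q *ᵥ w) + 2 * s * (e ⬝ᵥ (Q *ᵥ w)) + s^2 * (e ⬝ᵥ (Q *ᵥ e)) := by
  have h := symm_dot hQ w e
  simp only [Matrix.mulVec_add, Matrix.mulVec_smul, dotProduct_add, add_dotProduct,
    dotProduct_smul, smul_dotProduct, smul_eq_mul]
  rw [h]; ring

lemma conj_form {q r : ℕ} (N : Matrix (Fin q ⊕ Fin r) (Fin q ⊕ Fin r) ℝ)
    (Z : Matrix (Fin r) (Fin q) ℝ) (v : Fin q → ℝ) :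
    v ⬝ᵥ (((fromRows (1 : Matrix (Fin q) (Fin q) ℝ) Z)ᵀ * N * fromRows (1 : Matrix (Fin q) (Fin q) ℝ) Z) *ᵥ v) =
      (Sum.elim v (Z *ᵥ v)) ⬝ᵥ (N *ᵥ (Sum.elim v (Z *ᵥ v))) := by
  rw [← Matrix.mulVec_mulVec, ← Matrix.mulVec_mulVec, dot_shift, Matrix.transpose_transpose,
    Matrix.fromRows_mulVec, Matrix.one_mulVec, dotProduct_comm]

lemma elim_quad {q r : ℕ} (Q : Matrix (Fin q ⊕ Fin r) (Fin q ⊕ Fin r) ℝ) (x : Fin r → ℝ) :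
    (Sum.elim 0 x) ⬝ᵥ (Q *ᵥ Sum.elim 0 x) = x ⬝ᵥ (Q.toBlocks₂₂ *ᵥ x) := by
  simp [Matrix.mulVec, dotProduct, Matrix.toBlocks₂₂, Fintype.sum_sum_type]

lemma mem_ZSet_iff {q r : ℕ} {N : Matrix (Fin q ⊕ Fin r) (Fin q ⊕ Fin r) ℝ}
    (hN : N.IsSymm) (Z : Matrix (Fin r) (Fin q) ℝ) :
    Z ∈ ZSet N ↔ ∀ v : Fin q → ℝ,
      0 ≤ (Sum.elim v (Z *ᵥ v)) ⬝ᵥ (N *ᵥ (Sum.elim v (Z *ᵥ v))) := by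
  constructor
  · intro h v
    have := h.dotProduct_mulVec_nonneg v
    rwa [star_trivial, conj_form] at this
  · intro h
    refine Matrix.PosSemidef.of_dotProduct_mulVec_nonneg ?_ ?_
    · rw [Matrix.IsHermitian, Matrix.conjTranspose_eq_transpose_of_trivial]
      simp [Matrix.transpose_mul, hN.eq, Matrix.mul_assoc]
    · intro v
      rw [star_trivial, conj_form]
      exact h v

theorem stmt19 {q r : ℕ} (hq : 0 < q) (hr : 0 < r)
    {M N : Matrix (Fin q ⊕ Fin r) (Fin q ⊕ Fin r) ℝ}
    (hM : M.IsSymm) (hNs : N.IsSymm)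
    (hsub : ZSet N ⊆ ZSet M) (hne : (ZSet N).Nonempty)
    (hMPi : M ∈ PiSet (Fin q) (Fin r)) :
    ∀ x : Fin r → ℝ, x ⬝ᵥ (M.toBlocks₂₂ *ᵥ x) < 0 → x ⬝ᵥ (N.toBlocks₂₂ *ᵥ x) < 0 := by
  intro x hxM
  by_contra hxN
  push_neg at hxN
  obtain ⟨Z₀, hZ₀⟩ := hne
  set e : (Fin q ⊕ Fin r) → ℝ := Sum.elim 0 x with he
  have hα : 0 ≤ e ⬝ᵥ (N *ᵥ e) := by rw [he, elim_quad]; exact hxN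
  set b : Fin q → ℝ := (fromRows (1 : Matrix (Fin q) (Fin q) ℝ) Z₀)ᵀ *ᵥ (N *ᵥ e) with hb
  set c : Fin q → ℝ := if b = 0 then (fun _ => 1) else b with hc
  have hc0 : c ≠ 0 := by
    rw [hc]
    split
    · intro h
      have := congrFun h ⟨0, hq⟩
      simpa using this
    · assumption
  -- elim decomposition
  have helim : ∀ (v : Fin q → ℝ) (s : ℝ),
      Sum.elim v (Z₀ *ᵥ v + s • x) = Sum.elim v (Z₀ *ᵥ v) + s • e := by
    intro v s
    funext i
    cases i <;> simp [he]
  -- mulVec of perturbed matrix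
  have hmv : ∀ (t : ℝ) (v : Fin q → ℝ),
      (Z₀ + t • Matrix.of (fun i j => x i * c j)) *ᵥ v = Z₀ *ᵥ v + (t * (c ⬝ᵥ v)) • x := by
    intro t v
    funext i
    simp only [Matrix.mulVec, dotProduct, Matrix.add_apply, Matrix.smul_apply,
      Matrix.of_apply, Pi.add_apply, Pi.smul_apply, smul_eq_mul]
    simp only [add_mul]
    rw [Finset.sum_add_distrib]
    congr 1
    rw [mul_comm, Finset.mul_sum, Finset.mul_sum]
    apply Finset.sum_congr rfl
    intros; ring
  -- the cross term identity : e ⬝ᵥ N *ᵥ (elim v (Z₀ v)) = b ⬝ᵥ v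
  have hcross : ∀ v : Fin q → ℝ,
      e ⬝ᵥ (N *ᵥ (Sum.elim v (Z₀ *ᵥ v))) = b ⬝ᵥ v := by
    intro v
    have h1 : Sum.elim v (Z₀ *ᵥ v) = fromRows (1 : Matrix (Fin q) (Fin q) ℝ) Z₀ *ᵥ v := by
      rw [Matrix.fromRows_mulVec, Matrix.one_mulVec]
    rw [h1, symm_dot hNs, dotProduct_comm, dot_shift]
  -- Z_t ∈ ZSet N for all t ≥ 0
  have hZt : ∀ t : ℝ, 0 ≤ t → (Z₀ + t • Matrix.of (fun i j => x i * c j)) ∈ ZSet N := by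
    intro t ht
    rw [mem_ZSet_iff hNs]
    intro v
    rw [hmv t v, helim v (t * (c ⬝ᵥ v)), quad_expand hNs, hcross]
    have hbase : 0 ≤ Sum.elim v (Z₀ *ᵥ v) ⬝ᵥ (N *ᵥ Sum.elim v (Z₀ *ᵥ v)) :=
      (mem_ZSet_iff hNs Z₀).1 hZ₀ v
    have hmid : 0 ≤ 2 * (t * (c ⬝ᵥ v)) * (b ⬝ᵥ v) := by
      rcases eq_or_ne b 0 with h0 | h0
      · simp [h0]
      · have hcb : c = b := by rw [hc, if_neg h0]
        rw [hcb]
        nlinarith [sq_nonneg (b ⬝ᵥ v)]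
    have hsq : 0 ≤ (t * (c ⬝ᵥ v))^2 * (e ⬝ᵥ (N *ᵥ e)) := mul_nonneg (sq_nonneg _) hα
    linarith
  -- push through to M
  set w : (Fin q ⊕ Fin r) → ℝ := Sum.elim c (Z₀ *ᵥ c) with hw
  set A : ℝ := w ⬝ᵥ (M *ᵥ w) with hA
  set B : ℝ := e ⬝ᵥ (M *ᵥ w) with hB
  set γ : ℝ := e ⬝ᵥ (M *ᵥ e) with hγdef
  have hγ : γ < 0 := by rw [hγdef, he, elim_quad]; exact hxM
  have hs0 : 0 ≤ c ⬝ᵥ c := Finset.sum_nonneg fun i _ => mul_self_nonneg _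
  have hsne : c ⬝ᵥ c ≠ 0 := fun h => hc0 ((dotProduct_self_eq_zero).1 h)
  have hs : 0 < c ⬝ᵥ c := lt_of_le_of_ne hs0 (Ne.symm hsne)
  have hMle : ∀ t : ℝ, 0 ≤ t →
      0 ≤ (w + (t * (c ⬝ᵥ c)) • e) ⬝ᵥ (M *ᵥ (w + (t * (c ⬝ᵥ c)) • e)) := by
    intro t ht
    have h := (mem_ZSet_iff hM _).1 (hsub (hZt t ht)) c
    rwa [hmv t c, helim c _] at h
  have key : ∀ u : ℝ, 0 ≤ u → 0 ≤ A + 2 * u * B + u ^ 2 * γ := by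
    intro u hu
    have ht : 0 ≤ u / (c ⬝ᵥ c) := div_nonneg hu hs.le
    have h := hMle (u / (c ⬝ᵥ c)) ht
    rw [quad_expand hM] at h
    rwa [div_mul_cancel₀ u hsne] at h
  set u : ℝ := max 1 ((|A| + 2 * |B| + 1) / (-γ)) with hu
  have hu1 : (1 : ℝ) ≤ u := le_max_left _ _
  have hu2 : (|A| + 2 * |B| + 1) / (-γ) ≤ u := le_max_right _ _
  have hγpos : 0 < -γ := by linarith
  have h2 : |A| + 2 * |B| + 1 ≤ -γ * u := by
    rw [div_le_iff₀ hγpos] at hu2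
    linarith
  have hfin := key u (by linarith)
  nlinarith [le_abs_self A, le_abs_self B, neg_abs_le B, abs_nonneg A, abs_nonneg B, hu1, h2,
    mul_le_mul_of_nonneg_left h2 (by linarith : (0:ℝ) ≤ u)]

end
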